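/- arXiv:gr-qc/0701034 — 5 statements merged into one kernel-verified Lean document; each statement's English description precedes it below -/
import Mathlib

section
/- Fix constants k, Λ ∈ ℝ. Let W ⊆ ℝ² be open, let r, Ω : W → ℝ be C² with r > 0 and Ω > 0 everywhere, and let T_uv, T_uu, T_vv : W → ℝ be functions such that on W (writing ν = ∂_u r, λ = ∂_v r): (evol1) ∂_u∂_v r = −kΩ²/(4r) − r⁻¹νλ + 4πr·T_uv + (1/4)rΩ²Λ; (const2) ∂_u(Ω⁻²ν) = −4πr·T_uu·Ω⁻²; (const1) ∂_v(Ω⁻²λ) = −4πr·T_vv·Ω⁻². Define the Hawking mass m := (r/2)(k + 4Ω⁻²νλ). Then throughout W: ∂_u m = 8πr²Ω⁻²(T_uv·ν − T_uu·λ) + (Λ/2)r²·ν, and ∂_v m = 8πr²Ω⁻²(T_uv·λ − T_vv·ν) + (Λ/2)r²·λ. -/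
/-!
Write `m = (k/2) r + 2 r (Ω⁻² ν) λ`. By the product rule, `∂_u m` involves `∂_u r = ν`,
`∂_u (Ω⁻² ν)`, given by (const2), and `∂_u λ = ∂_u ∂_v r`, given by (evol1); the `k`-terms
and the `νλ/r`-terms cancel. For `∂_v m` one groups `m = (k/2) r + 2 r (Ω⁻² λ) ν` instead and
uses (const1), (evol1) and the symmetry `∂_v ∂_u r = ∂_u ∂_v r` of the second derivatives of
the `C²` function `r`.
-/

open Real

/-- Partial derivative with respect to the first (`u`) coordinate. -/
noncomputable def pd1 (f : ℝ × ℝ → ℝ) (p : ℝ × ℝ) : ℝ :=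
  deriv (fun x => f (x, p.2)) p.1

/-- Partial derivative with respect to the second (`v`) coordinate. -/
noncomputable def pd2 (f : ℝ × ℝ → ℝ) (p : ℝ × ℝ) : ℝ :=
  deriv (fun y => f (p.1, y)) p.2

section PartialDerivatives

variable {f : ℝ × ℝ → ℝ} {p : ℝ × ℝ}

lemma DifferentiableAt.hasDerivAt_fderiv_slice1 (h : DifferentiableAt ℝ f p) :
    HasDerivAt (fun x => f (x, p.2)) (fderiv ℝ f p (1, 0)) p.1 :=
  h.hasFDerivAt.comp_hasDerivAt p.1 ((hasDerivAt_id p.1).prodMk (hasDerivAt_const p.1 p.2))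

lemma DifferentiableAt.hasDerivAt_fderiv_slice2 (h : DifferentiableAt ℝ f p) :
    HasDerivAt (fun y => f (p.1, y)) (fderiv ℝ f p (0, 1)) p.2 :=
  h.hasFDerivAt.comp_hasDerivAt p.2 ((hasDerivAt_const p.2 p.1).prodMk (hasDerivAt_id p.2))

lemma pd1_eq_fderiv (h : DifferentiableAt ℝ f p) : pd1 f p = fderiv ℝ f p (1, 0) :=
  h.hasDerivAt_fderiv_slice1.deriv

lemma pd2_eq_fderiv (h : DifferentiableAt ℝ f p) : pd2 f p = fderiv ℝ f p (0, 1) :=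
  h.hasDerivAt_fderiv_slice2.deriv

lemma DifferentiableAt.hasDerivAt_pd1 (h : DifferentiableAt ℝ f p) :
    HasDerivAt (fun x => f (x, p.2)) (pd1 f p) p.1 :=
  pd1_eq_fderiv h ▸ h.hasDerivAt_fderiv_slice1

lemma DifferentiableAt.hasDerivAt_pd2 (h : DifferentiableAt ℝ f p) :
    HasDerivAt (fun y => f (p.1, y)) (pd2 f p) p.2 :=
  pd2_eq_fderiv h ▸ h.hasDerivAt_fderiv_slice2

lemma pd1_eventuallyEq_fderiv (h : ContDiffAt ℝ 2 f p) :
    pd1 f =ᶠ[nhds p] fun q => fderiv ℝ f q (1, 0) :=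
  (h.eventually (by simp)).mono fun _ hq => pd1_eq_fderiv (hq.differentiableAt two_ne_zero)

lemma pd2_eventuallyEq_fderiv (h : ContDiffAt ℝ 2 f p) :
    pd2 f =ᶠ[nhds p] fun q => fderiv ℝ f q (0, 1) :=
  (h.eventually (by simp)).mono fun _ hq => pd2_eq_fderiv (hq.differentiableAt two_ne_zero)

lemma ContDiffAt.differentiableAt_fderiv_two (h : ContDiffAt ℝ 2 f p) :
    DifferentiableAt ℝ (fderiv ℝ f) p :=
  (h.fderiv_right (by norm_num)).differentiableAt one_ne_zero

lemma ContDiffAt.differentiableAt_pd1 (h : ContDiffAt ℝ 2 f p) : DifferentiableAt ℝ (pd1 f) p :=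
  (h.differentiableAt_fderiv_two.clm_apply (differentiableAt_const _)).congr_of_eventuallyEq
    (pd1_eventuallyEq_fderiv h)

lemma ContDiffAt.differentiableAt_pd2 (h : ContDiffAt ℝ 2 f p) : DifferentiableAt ℝ (pd2 f) p :=
  (h.differentiableAt_fderiv_two.clm_apply (differentiableAt_const _)).congr_of_eventuallyEq
    (pd2_eventuallyEq_fderiv h)

lemma ContDiffAt.pd2_pd1_eq_pd1_pd2 (h : ContDiffAt ℝ 2 f p) : pd2 (pd1 f) p = pd1 (pd2 f) p := by
  have hF := h.differentiableAt_fderiv_two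
  rw [pd2_eq_fderiv h.differentiableAt_pd1, pd1_eq_fderiv h.differentiableAt_pd2,
    (pd1_eventuallyEq_fderiv h).fderiv_eq, (pd2_eventuallyEq_fderiv h).fderiv_eq,
    fderiv_clm_apply hF (differentiableAt_const _), fderiv_clm_apply hF (differentiableAt_const _)]
  simpa using h.isSymmSndFDerivAt (by simp [minSmoothness_of_isRCLikeNormedField]) (0, 1) (1, 0)

end PartialDerivatives

section HawkingMass

variable {k : ℝ} {r a b : ℝ × ℝ → ℝ} {p : ℝ × ℝ}

lemma pd1_mass_form (hr : DifferentiableAt ℝ r p) (ha : DifferentiableAt ℝ a p)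
    (hb : DifferentiableAt ℝ b p) :
    pd1 (fun q => r q / 2 * (k + 4 * (a q * b q))) p =
      pd1 r p / 2 * (k + 4 * (a p * b p)) + 2 * r p * (pd1 a p * b p + a p * pd1 b p) :=
  (hr.hasDerivAt_pd1.div_const 2 |>.fun_mul
    ((ha.hasDerivAt_pd1.fun_mul hb.hasDerivAt_pd1).const_mul 4 |>.const_add k)).deriv.trans
    (by ring)

lemma pd2_mass_form (hr : DifferentiableAt ℝ r p) (ha : DifferentiableAt ℝ a p)
    (hb : DifferentiableAt ℝ b p) :
    pd2 (fun q => r q / 2 * (k + 4 * (a q * b q))) p =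
      pd2 r p / 2 * (k + 4 * (a p * b p)) + 2 * r p * (pd2 a p * b p + a p * pd2 b p) :=
  (hr.hasDerivAt_pd2.div_const 2 |>.fun_mul
    ((ha.hasDerivAt_pd2.fun_mul hb.hasDerivAt_pd2).const_mul 4 |>.const_add k)).deriv.trans
    (by ring)

end HawkingMass

/-- `ν` and `l` are the derivatives of `r` along and across the null direction; the two
bracketed terms are the values that (const) and (evol1) give for the derivatives of `Ω⁻² ν`
and `l` along it. -/
lemma hawkingMass_flux_identity (k Λ r ω ν l Tuv T : ℝ) (hr : r ≠ 0) (hω : ω ≠ 0) :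
    ν / 2 * (k + 4 * ((ω ^ 2)⁻¹ * ν * l)) + 2 * r * (-(4 * π * r * T * (ω ^ 2)⁻¹) * l +
      (ω ^ 2)⁻¹ * ν * (-(k * ω ^ 2) / (4 * r) - r⁻¹ * ν * l + 4 * π * r * Tuv
        + 1 / 4 * r * ω ^ 2 * Λ)) =
      8 * π * r ^ 2 * (ω ^ 2)⁻¹ * (Tuv * ν - T * l) + Λ / 2 * r ^ 2 * ν := by
  field_simp
  ring

/-- The identities (pum) and (pvm) for the Hawking mass
`m = (r/2)(k + 4 Ω⁻² (∂_u r)(∂_v r))`. -/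
theorem hawking_mass_derivative_identities
    (k Λ : ℝ) (W : Set (ℝ × ℝ)) (hW : IsOpen W)
    (r Ω Tuv Tuu Tvv : ℝ × ℝ → ℝ)
    (hr : ContDiffOn ℝ 2 r W) (hΩ : ContDiffOn ℝ 2 Ω W)
    (hrpos : ∀ p ∈ W, 0 < r p) (hΩpos : ∀ p ∈ W, 0 < Ω p)
    (hevol1 : ∀ p ∈ W, pd1 (pd2 r) p =
      -(k * Ω p ^ 2) / (4 * r p) - (r p)⁻¹ * pd1 r p * pd2 r p
        + 4 * π * r p * Tuv p + (1 / 4) * r p * Ω p ^ 2 * Λ)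
    (hconst2 : ∀ p ∈ W, pd1 (fun q => (Ω q ^ 2)⁻¹ * pd1 r q) p =
      -(4 * π * r p * Tuu p * (Ω p ^ 2)⁻¹))
    (hconst1 : ∀ p ∈ W, pd2 (fun q => (Ω q ^ 2)⁻¹ * pd2 r q) p =
      -(4 * π * r p * Tvv p * (Ω p ^ 2)⁻¹)) :
    ∀ p ∈ W,
      pd1 (fun q => r q / 2 * (k + 4 * (Ω q ^ 2)⁻¹ * pd1 r q * pd2 r q)) p =
        8 * π * r p ^ 2 * (Ω p ^ 2)⁻¹ * (Tuv p * pd1 r p - Tuu p * pd2 r p)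
          + (Λ / 2) * r p ^ 2 * pd1 r p ∧
      pd2 (fun q => r q / 2 * (k + 4 * (Ω q ^ 2)⁻¹ * pd1 r q * pd2 r q)) p =
        8 * π * r p ^ 2 * (Ω p ^ 2)⁻¹ * (Tuv p * pd2 r p - Tvv p * pd1 r p)
          + (Λ / 2) * r p ^ 2 * pd2 r p := by
  intro p hp
  have hrp : ContDiffAt ℝ 2 r p := hr.contDiffAt (hW.mem_nhds hp)
  have hrd := hrp.differentiableAt two_ne_zero
  have hΩinv : DifferentiableAt ℝ (fun q => (Ω q ^ 2)⁻¹) p :=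
    (((hΩ.contDiffAt (hW.mem_nhds hp)).differentiableAt two_ne_zero).pow 2).inv
      (pow_ne_zero 2 (hΩpos p hp).ne')
  have hmass_u : (fun q => r q / 2 * (k + 4 * (Ω q ^ 2)⁻¹ * pd1 r q * pd2 r q)) =
      fun q => r q / 2 * (k + 4 * ((Ω q ^ 2)⁻¹ * pd1 r q * pd2 r q)) := by
    funext q; ring
  have hmass_v : (fun q => r q / 2 * (k + 4 * (Ω q ^ 2)⁻¹ * pd1 r q * pd2 r q)) =
      fun q => r q / 2 * (k + 4 * ((Ω q ^ 2)⁻¹ * pd2 r q * pd1 r q)) := by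
    funext q; ring
  have hr0 := (hrpos p hp).ne'
  have hΩ0 := (hΩpos p hp).ne'
  constructor
  · rw [hmass_u, pd1_mass_form hrd (hΩinv.fun_mul hrp.differentiableAt_pd1)
      hrp.differentiableAt_pd2, hconst2 p hp, hevol1 p hp]
    exact hawkingMass_flux_identity k Λ _ _ _ _ (Tuv p) (Tuu p) hr0 hΩ0
  · rw [hmass_v, pd2_mass_form hrd (hΩinv.fun_mul hrp.differentiableAt_pd2)
      hrp.differentiableAt_pd1, hconst1 p hp, hrp.pd2_pd1_eq_pd1_pd2, hevol1 p hp]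
    linear_combination
      hawkingMass_flux_identity k Λ _ _ (pd2 r p) (pd1 r p) (Tuv p) (Tvv p) hr0 hΩ0
end

section
/- Let G be a symmetric positive-definite 2×2 real matrix, and let r, Ω, r₀ be positive reals with r ≥ r₀, and F ≥ 0, X ≥ 0. Let f : (0,∞)×ℝ² → [0,∞) be measurable with f ≤ F everywhere and f(p,q) = 0 whenever r⁴·⟨q, G q⟩ > X. Define P(p,q) := (1 + r²⟨q, G q⟩)/(Ω² p) (the mass-shell value of p^v), and set (as integrals with values in [0,∞]) N^u := ∫ r² f(p,q) √(det G) dp dq, N^v := ∫ r² P(p,q) f(p,q) p⁻¹ √(det G) dp dq, and T_uv := (Ω⁴/4) ∫ r² P(p,q) f(p,q) √(det G) dp dq, the integrals taken over (0,∞)×ℝ². Then T_uv ≤ (1 + X r₀⁻²)·(Ω²/4)·(N^u + N^v) + (1 + X r₀⁻²)·(Ω²/4)·π F X r₀⁻²·max(0, log(Ω²)). -/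
open MeasureTheory Matrix Real

/-!
On the mass shell `Ω² p^u p^v = 1 + r²⟨p^A, G p^A⟩`, and on the support of `f` the right-hand
side is at most `C = 1 + X r₀⁻²`. The `T_uv` density `(Ω⁴/4) p^v` is then split according to the
size of `p^u`: for `p^u ≥ 1` it is at most `C Ω²/4` times the `N^u` density, for `p^u ≤ Ω⁻²` at
most `Ω²/4` times the `N^v` density `p^v/p^u`, and in between at most `C (Ω²/4) F r² √det G / p^u`.
Integrating the last bound over `p^u ∈ (Ω⁻², 1)` and the ellipse `⟨p^A, G p^A⟩ ≤ X r⁻⁴`, of area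
`π X r⁻⁴ / √det G`, gives the logarithmic error term.
-/

theorem Matrix.PosSemidef.exists_eq_transpose_mul_self {ι : Type*} [Fintype ι] [DecidableEq ι]
    {G : Matrix ι ι ℝ} (hG : G.PosSemidef) : ∃ B : Matrix ι ι ℝ, G = Bᵀ * B := by
  open scoped MatrixOrder in
  simpa only [star_eq_conjTranspose, conjTranspose_eq_transpose_of_trivial]
    using CStarAlgebra.nonneg_iff_eq_star_mul_self.mp hG.nonneg

theorem volume_setOf_dotProduct_mulVec_le {ι : Type*} [Fintype ι] [DecidableEq ι]
    {G : Matrix ι ι ℝ} (hG : G.PosDef) (c : ℝ) :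
    volume {q : ι → ℝ | q ⬝ᵥ G *ᵥ q ≤ c}
      = ENNReal.ofReal (√G.det)⁻¹ * volume {y : ι → ℝ | y ⬝ᵥ y ≤ c} := by
  obtain ⟨B, rfl⟩ := hG.posSemidef.exists_eq_transpose_mul_self
  have hdet : (Bᵀ * B).det = B.det ^ 2 := by rw [det_mul, det_transpose, sq]
  have hB : LinearMap.det (toLin' B) ≠ 0 := by
    rw [LinearMap.det_toLin']
    exact fun h => hG.det_pos.ne' (by rw [hdet, h]; ring)
  have hpre : {q : ι → ℝ | q ⬝ᵥ (Bᵀ * B) *ᵥ q ≤ c} = toLin' B ⁻¹' {y | y ⬝ᵥ y ≤ c} := by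
    ext q
    simp only [Set.mem_ofPred_eq, Set.mem_preimage, toLin'_apply, ← mulVec_mulVec,
      dotProduct_mulVec, vecMul_transpose]
  rw [hpre, Measure.addHaar_preimage_linearMap _ hB, LinearMap.det_toLin', hdet,
    sqrt_sq_eq_abs, abs_inv]

theorem volume_setOf_dotProduct_self_le_fin_two {c : ℝ} (hc : 0 ≤ c) :
    volume {y : Fin 2 → ℝ | y ⬝ᵥ y ≤ c} = ENNReal.ofReal c * ENNReal.ofReal π := by
  have hball : {y : Fin 2 → ℝ | y ⬝ᵥ y ≤ c}
      = WithLp.toLp 2 ⁻¹' Metric.closedBall (0 : EuclideanSpace ℝ (Fin 2)) √c := by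
    ext y
    rw [Set.mem_preimage, mem_closedBall_zero_iff, Real.le_sqrt (norm_nonneg _) hc,
      ← real_inner_self_eq_norm_sq, EuclideanSpace.inner_toLp_toLp, star_trivial]
    rfl
  rw [hball, (PiLp.volume_preserving_toLp (Fin 2)).measure_preimage
    measurableSet_closedBall.nullMeasurableSet, EuclideanSpace.volume_closedBall_fin_two,
    ← ENNReal.ofReal_pow (sqrt_nonneg c), sq_sqrt hc]

theorem lintegral_Ioo_inv {a b : ℝ} (ha : 0 < a) (hb : 0 < b) :
    ∫⁻ p in Set.Ioo a b, ENNReal.ofReal p⁻¹ = ENNReal.ofReal (log (b / a)) := by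
  rcases le_or_gt a b with hab | hba
  · have h0 : (0 : ℝ) ∉ Set.uIcc a b := by
      rw [Set.uIcc_of_le hab]
      exact fun h => ha.not_ge h.1
    have hint : IntegrableOn (fun p : ℝ => p⁻¹) (Set.Ioo a b) :=
      (intervalIntegrable_inv_iff.mpr (Or.inr h0)).1.mono_set Set.Ioo_subset_Ioc_self
    have hnonneg : 0 ≤ᵐ[volume.restrict (Set.Ioo a b)] fun p : ℝ => p⁻¹ :=
      (ae_restrict_iff' measurableSet_Ioo).2
        (.of_forall fun p hp => inv_nonneg.2 (ha.trans hp.1).le)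
    rw [← ofReal_integral_eq_lintegral_ofReal hint hnonneg, ← integral_Ioc_eq_integral_Ioo,
      ← intervalIntegral.integral_of_le hab, integral_inv_of_pos ha hb]
  · rw [Set.Ioo_eq_empty hba.le.not_gt, Measure.restrict_empty, lintegral_zero_measure,
      ENNReal.ofReal_eq_zero.2 (log_nonpos (by positivity) ((div_le_one ha).2 hba.le))]

theorem lintegral_indicator_Ioo_inv_mul_indicator {β : Type*} [MeasureSpace β]
    [SFinite (volume : Measure β)] {a b : ℝ} (ha : 0 < a) (hb : 0 < b) {E : Set β}
    (hE : MeasurableSet E) :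
    ∫⁻ x : ℝ × β, (Set.Ioo a b).indicator (fun p => ENNReal.ofReal p⁻¹) x.1 * E.indicator 1 x.2
      = ENNReal.ofReal (log (b / a)) * volume E := by
  rw [Measure.volume_eq_prod, lintegral_prod_mul
      ((measurable_inv.ennreal_ofReal.indicator measurableSet_Ioo).aemeasurable)
      ((measurable_one.indicator hE).aemeasurable),
    lintegral_indicator measurableSet_Ioo, lintegral_Ioo_inv ha hb, lintegral_indicator_one hE]

theorem lintegral_indicator_Ioo_inv_mul_indicator_ellipse_le {G : Matrix (Fin 2) (Fin 2) ℝ}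
    (hG : G.PosDef) {Ω c : ℝ} (hΩ : 0 < Ω) (hc : 0 ≤ c) :
    ∫⁻ x : ℝ × (Fin 2 → ℝ), (Set.Ioo (Ω ^ 2)⁻¹ 1).indicator (fun p => ENNReal.ofReal p⁻¹) x.1
        * {q | q ⬝ᵥ G *ᵥ q ≤ c}.indicator 1 x.2
      ≤ ENNReal.ofReal (max 0 (log (Ω ^ 2)) * (π * c) / √G.det) := by
  rw [lintegral_indicator_Ioo_inv_mul_indicator (by positivity) one_pos
      (measurableSet_le (by fun_prop) (by fun_prop)),
    volume_setOf_dotProduct_mulVec_le hG, volume_setOf_dotProduct_self_le_fin_two hc,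
    one_div, inv_inv]
  grw [le_max_right 0 (log (Ω ^ 2))]
  rw [← ENNReal.ofReal_mul (by positivity), ← ENNReal.ofReal_mul (by positivity),
    ← ENNReal.ofReal_mul (by positivity)]
  refine le_of_eq (congrArg ENNReal.ofReal ?_)
  ring

theorem ofReal_Tuv_density_le_of_mass_shell_le {Ω C pu pv w M : ℝ} (hΩ : 0 < Ω) (hC : 1 ≤ C)
    (hpu : 0 < pu) (hpv : 0 ≤ pv) (hshell : Ω ^ 2 * pu * pv ≤ C) (hw : 0 ≤ w) (hwM : w ≤ M) :
    ENNReal.ofReal (Ω ^ 4 / 4 * (pv * w))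
      ≤ ENNReal.ofReal (C * (Ω ^ 2 / 4)) * (ENNReal.ofReal w + ENNReal.ofReal (pv * w * pu⁻¹))
        + ENNReal.ofReal (C * (Ω ^ 2 / 4) * M)
          * (Set.Ioo (Ω ^ 2)⁻¹ 1).indicator (fun p => ENNReal.ofReal p⁻¹) pu := by
  have hc : 0 ≤ C * (Ω ^ 2 / 4) := by positivity
  rcases le_or_gt 1 pu with hpu1 | hpu1
  · have hbound : Ω ^ 4 / 4 * (pv * w) ≤ C * (Ω ^ 2 / 4) * w := by
      have hΩpv : Ω ^ 2 * pv ≤ C := by nlinarith [mul_nonneg (sq_nonneg Ω) hpv]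
      calc Ω ^ 4 / 4 * (pv * w) = Ω ^ 2 * pv * (Ω ^ 2 / 4) * w := by ring
        _ ≤ C * (Ω ^ 2 / 4) * w := by gcongr
    calc ENNReal.ofReal (Ω ^ 4 / 4 * (pv * w)) ≤ ENNReal.ofReal (C * (Ω ^ 2 / 4) * w) :=
          ENNReal.ofReal_le_ofReal hbound
      _ = ENNReal.ofReal (C * (Ω ^ 2 / 4)) * ENNReal.ofReal w := ENNReal.ofReal_mul hc
      _ ≤ _ := le_add_right (by gcongr; exact le_self_add)
  rcases le_or_gt pu (Ω ^ 2)⁻¹ with hpuΩ | hpuΩ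
  · have hbound : Ω ^ 4 / 4 * (pv * w) ≤ C * (Ω ^ 2 / 4) * (pv * w * pu⁻¹) := by
      have hΩpu : Ω ^ 2 * pu ≤ 1 :=
        calc Ω ^ 2 * pu ≤ Ω ^ 2 * (Ω ^ 2)⁻¹ := by gcongr
          _ = 1 := mul_inv_cancel₀ (by positivity)
      calc Ω ^ 4 / 4 * (pv * w) = Ω ^ 2 * pu * (Ω ^ 2 / 4) * (pv * w * pu⁻¹) := by
            field_simp
        _ ≤ C * (Ω ^ 2 / 4) * (pv * w * pu⁻¹) := by gcongr; exact hΩpu.trans hC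
    calc ENNReal.ofReal (Ω ^ 4 / 4 * (pv * w))
          ≤ ENNReal.ofReal (C * (Ω ^ 2 / 4) * (pv * w * pu⁻¹)) :=
            ENNReal.ofReal_le_ofReal hbound
      _ = ENNReal.ofReal (C * (Ω ^ 2 / 4)) * ENNReal.ofReal (pv * w * pu⁻¹) :=
            ENNReal.ofReal_mul hc
      _ ≤ _ := le_add_right (by gcongr; exact le_add_self)
  · have hbound : Ω ^ 4 / 4 * (pv * w) ≤ C * (Ω ^ 2 / 4) * M * pu⁻¹ := by
      calc Ω ^ 4 / 4 * (pv * w) = Ω ^ 2 * pu * pv * (Ω ^ 2 / 4) * w * pu⁻¹ := by field_simp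
        _ ≤ C * (Ω ^ 2 / 4) * M * pu⁻¹ := by gcongr
    calc ENNReal.ofReal (Ω ^ 4 / 4 * (pv * w)) ≤ ENNReal.ofReal (C * (Ω ^ 2 / 4) * M * pu⁻¹) :=
          ENNReal.ofReal_le_ofReal hbound
      _ = ENNReal.ofReal (C * (Ω ^ 2 / 4) * M)
            * (Set.Ioo (Ω ^ 2)⁻¹ 1).indicator (fun p => ENNReal.ofReal p⁻¹) pu := by
          rw [Set.indicator_of_mem (show pu ∈ Set.Ioo (Ω ^ 2)⁻¹ 1 from ⟨hpuΩ, hpu1⟩),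
            ← ENNReal.ofReal_mul (mul_nonneg hc (hw.trans hwM))]
      _ ≤ _ := le_add_self

theorem ofReal_Tuv_density_le {ι : Type*} [Fintype ι] [DecidableEq ι] {G : Matrix ι ι ℝ}
    (hG : G.PosSemidef) {r Ω C F X p φ : ℝ} {q : ι → ℝ} (hr : 0 < r) (hΩ : 0 < Ω)
    (hC : 1 + X * (r ^ 2)⁻¹ ≤ C) (hp : 0 < p) (hφ : 0 ≤ φ) (hφF : φ ≤ F)
    (hsupp : r ^ 4 * (q ⬝ᵥ G *ᵥ q) > X → φ = 0) :
    ENNReal.ofReal (Ω ^ 4 / 4 * (r ^ 2 * ((1 + r ^ 2 * (q ⬝ᵥ G *ᵥ q)) / (Ω ^ 2 * p)) * φ * √G.det))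
      ≤ ENNReal.ofReal (C * (Ω ^ 2 / 4)) * (ENNReal.ofReal (r ^ 2 * φ * √G.det)
          + ENNReal.ofReal (r ^ 2 * ((1 + r ^ 2 * (q ⬝ᵥ G *ᵥ q)) / (Ω ^ 2 * p)) * φ * p⁻¹ * √G.det))
        + ENNReal.ofReal (C * (Ω ^ 2 / 4) * (r ^ 2 * F * √G.det))
          * ((Set.Ioo (Ω ^ 2)⁻¹ 1).indicator (fun p => ENNReal.ofReal p⁻¹) p
            * {q | q ⬝ᵥ G *ᵥ q ≤ X / r ^ 4}.indicator 1 q) := by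
  by_cases hq : q ⬝ᵥ G *ᵥ q ≤ X / r ^ 4
  swap
  · rw [hsupp (by rwa [not_le, div_lt_iff₀' (by positivity)] at hq)]
    simp
  have hQ : 0 ≤ q ⬝ᵥ G *ᵥ q := by simpa only [star_trivial] using hG.dotProduct_mulVec_nonneg q
  have hshell : 1 + r ^ 2 * (q ⬝ᵥ G *ᵥ q) ≤ C :=
    calc 1 + r ^ 2 * (q ⬝ᵥ G *ᵥ q) ≤ 1 + r ^ 2 * (X / r ^ 4) := by gcongr
      _ = 1 + X * (r ^ 2)⁻¹ := by field_simp
      _ ≤ C := hC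
  have key := ofReal_Tuv_density_le_of_mass_shell_le hΩ
    (le_of_add_le_of_nonneg_left hshell (by positivity)) hp
    (pv := (1 + r ^ 2 * (q ⬝ᵥ G *ᵥ q)) / (Ω ^ 2 * p)) (by positivity)
    (by rwa [mul_div_cancel₀ _ (by positivity)])
    (w := r ^ 2 * φ * √G.det) (M := r ^ 2 * F * √G.det) (by positivity) (by gcongr)
  convert key using 3
  · ring
  · congr 2
    ring
  · rw [Set.indicator_of_mem (show q ∈ {q | q ⬝ᵥ G *ᵥ q ≤ X / r ^ 4} from hq), Pi.one_apply,
      mul_one]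

theorem Tuv_particle_current_estimate_general
    (G : Matrix (Fin 2) (Fin 2) ℝ) (hGpos : G.PosDef)
    (r Ω r₀ : ℝ) (hr : 0 < r) (hΩ : 0 < Ω) (hr₀ : 0 < r₀) (hrr₀ : r₀ ≤ r)
    (F X : ℝ) (hF : 0 ≤ F) (hX : 0 ≤ X)
    (f : ℝ × (Fin 2 → ℝ) → ℝ) (hfmeas : Measurable f)
    (hf0 : ∀ x ∈ Set.Ioi (0 : ℝ) ×ˢ (Set.univ : Set (Fin 2 → ℝ)), 0 ≤ f x)
    (hfF : ∀ x ∈ Set.Ioi (0 : ℝ) ×ˢ (Set.univ : Set (Fin 2 → ℝ)), f x ≤ F)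
    (hfsupp : ∀ x ∈ Set.Ioi (0 : ℝ) ×ˢ (Set.univ : Set (Fin 2 → ℝ)),
      r ^ 4 * (x.2 ⬝ᵥ G.mulVec x.2) > X → f x = 0) :
    (∫⁻ x in Set.Ioi (0 : ℝ) ×ˢ (Set.univ : Set (Fin 2 → ℝ)),
        ENNReal.ofReal (Ω ^ 4 / 4 * (r ^ 2 *
          ((1 + r ^ 2 * (x.2 ⬝ᵥ G.mulVec x.2)) / (Ω ^ 2 * x.1)) * f x *
            Real.sqrt G.det)))
      ≤ ENNReal.ofReal ((1 + X * (r₀ ^ 2)⁻¹) * (Ω ^ 2 / 4)) *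
          ((∫⁻ x in Set.Ioi (0 : ℝ) ×ˢ (Set.univ : Set (Fin 2 → ℝ)),
              ENNReal.ofReal (r ^ 2 * f x * Real.sqrt G.det))
            + ∫⁻ x in Set.Ioi (0 : ℝ) ×ˢ (Set.univ : Set (Fin 2 → ℝ)),
              ENNReal.ofReal (r ^ 2 *
                ((1 + r ^ 2 * (x.2 ⬝ᵥ G.mulVec x.2)) / (Ω ^ 2 * x.1)) * f x * x.1⁻¹ *
                  Real.sqrt G.det))
        + ENNReal.ofReal ((1 + X * (r₀ ^ 2)⁻¹) * (Ω ^ 2 / 4) *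
            (π * F * X * (r₀ ^ 2)⁻¹ * max 0 (Real.log (Ω ^ 2)))) := by
  have hC : 1 + X * (r ^ 2)⁻¹ ≤ 1 + X * (r₀ ^ 2)⁻¹ := by gcongr
  refine (setLIntegral_mono' (measurableSet_Ioi.prod .univ) fun x hx =>
    ofReal_Tuv_density_le hGpos.posSemidef hr hΩ hC hx.1 (hf0 x hx) (hfF x hx)
      (hfsupp x hx)).trans ?_
  rw [lintegral_add_left (by fun_prop), lintegral_const_mul' _ _ ENNReal.ofReal_ne_top,
    lintegral_add_left (by fun_prop), lintegral_const_mul' _ _ ENNReal.ofReal_ne_top]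
  gcongr _ + ?_
  grw [setLIntegral_le_lintegral _ _,
    lintegral_indicator_Ioo_inv_mul_indicator_ellipse_le hGpos hΩ (by positivity),
    ← ENNReal.ofReal_mul (by positivity)]
  have hdet : √G.det ≠ 0 := (sqrt_pos.2 hGpos.det_pos).ne'
  refine ENNReal.ofReal_le_ofReal ?_
  calc _ = (1 + X * (r₀ ^ 2)⁻¹) * (Ω ^ 2 / 4)
        * (π * F * X * (r ^ 2)⁻¹ * max 0 (log (Ω ^ 2))) := by field_simp
    _ ≤ _ := by gcongr

/-- The null-structure estimate (comput): the energy-momentum component `T_uv` is bounded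
by the particle currents `N^u`, `N^v` plus a small-momentum error, exploiting the angular
momentum bound `r⁴⟨q, G q⟩ ≤ X` on the support of `f` and `0 ≤ f ≤ F`. -/
theorem Tuv_particle_current_estimate
    (G : Matrix (Fin 2) (Fin 2) ℝ) (hGsymm : G.IsSymm) (hGpos : G.PosDef)
    (r Ω r₀ : ℝ) (hr : 0 < r) (hΩ : 0 < Ω) (hr₀ : 0 < r₀) (hrr₀ : r₀ ≤ r)
    (F X : ℝ) (hF : 0 ≤ F) (hX : 0 ≤ X)
    (f : ℝ × (Fin 2 → ℝ) → ℝ) (hfmeas : Measurable f)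
    (hf0 : ∀ x ∈ Set.Ioi (0 : ℝ) ×ˢ (Set.univ : Set (Fin 2 → ℝ)), 0 ≤ f x)
    (hfF : ∀ x ∈ Set.Ioi (0 : ℝ) ×ˢ (Set.univ : Set (Fin 2 → ℝ)), f x ≤ F)
    (hfsupp : ∀ x ∈ Set.Ioi (0 : ℝ) ×ˢ (Set.univ : Set (Fin 2 → ℝ)),
      r ^ 4 * (x.2 ⬝ᵥ G.mulVec x.2) > X → f x = 0) :
    (∫⁻ x in Set.Ioi (0 : ℝ) ×ˢ (Set.univ : Set (Fin 2 → ℝ)),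
        ENNReal.ofReal (Ω ^ 4 / 4 * (r ^ 2 *
          ((1 + r ^ 2 * (x.2 ⬝ᵥ G.mulVec x.2)) / (Ω ^ 2 * x.1)) * f x *
            Real.sqrt G.det)))
      ≤ ENNReal.ofReal ((1 + X * (r₀ ^ 2)⁻¹) * (Ω ^ 2 / 4)) *
          ((∫⁻ x in Set.Ioi (0 : ℝ) ×ˢ (Set.univ : Set (Fin 2 → ℝ)),
              ENNReal.ofReal (r ^ 2 * f x * Real.sqrt G.det))
            + ∫⁻ x in Set.Ioi (0 : ℝ) ×ˢ (Set.univ : Set (Fin 2 → ℝ)),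
              ENNReal.ofReal (r ^ 2 *
                ((1 + r ^ 2 * (x.2 ⬝ᵥ G.mulVec x.2)) / (Ω ^ 2 * x.1)) * f x * x.1⁻¹ *
                  Real.sqrt G.det))
        + ENNReal.ofReal ((1 + X * (r₀ ^ 2)⁻¹) * (Ω ^ 2 / 4) *
            (π * F * X * (r₀ ^ 2)⁻¹ * max 0 (Real.log (Ω ^ 2)))) :=
  Tuv_particle_current_estimate_general G hGpos r Ω r₀ hr hΩ hr₀ hrr₀ F X hF hX f hfmeas hf0 hfF
    hfsupp
end

section
/- For all constants k, Λ ∈ ℝ and reals 0 < r₀ ≤ R and V > 0 there exists C̃ > 0 with the following property. Let r : [0,V] → ℝ be C¹ with r₀ ≤ r ≤ R, write λ := r', let Ω, T : [0,V] → ℝ be continuous with Ω > 0 and T ≥ 0, and let ν : [0,V] → ℝ be C¹ satisfying ν'(v) = −k Ω(v)²/(4 r(v)) − r(v)⁻¹ λ(v) ν(v) + 4π r(v) T(v) + (1/4) r(v) Ω(v)² Λ for all v ∈ [0,V]. Then sup_{v∈[0,V]} |ν(v)| ≤ C̃ · ( |ν(0)| + |ν(V)| + ∫₀^V Ω(v̄)²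 dv̄ ). -/
open Real Set

/-! The matter term enters `∂_v (r ν) = -kΩ²/4 + 4π r² T + r² Ω² Λ/4` with a favourable sign, so
`∂_v (r ν) ≥ -c Ω²` for `c = (|k| + R² |Λ|)/4`. Integrating from `0` up to `v` and from `v` up to `V`
bounds `r ν` at `v` from below and from above by its endpoint values and `c ∫ Ω²`; dividing by
`r ≥ r₀` gives the estimate with `C̃ = (R + c)/r₀`. -/

theorem neg_integral_le_sub_of_hasDerivWithinAt_ge_neg {f f' w : ℝ → ℝ} {a b : ℝ} (hab : a ≤ b)
    (hf : ∀ t ∈ Icc a b, HasDerivWithinAt f (f' t) (Icc a b) t)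
    (hw : ContinuousOn w (Icc a b)) (hf' : ∀ t ∈ Icc a b, -w t ≤ f' t) :
    -∫ t in a..b, w t ≤ f b - f a := by
  rw [← intervalIntegral.integral_neg]
  refine intervalIntegral.integral_le_sub_of_hasDeriv_right_of_le hab
    (fun t ht ↦ (hf t ht).continuousWithinAt) (fun t ht ↦ ?_) hw.neg.integrableOn_Icc
    (fun t ht ↦ hf' t (Ioo_subset_Icc_self ht))
  exact ((hf t (Ioo_subset_Icc_self ht)).hasDerivAt (Icc_mem_nhds ht.1 ht.2)).hasDerivWithinAt

theorem abs_le_of_hasDerivWithinAt_ge_neg {f f' w : ℝ → ℝ} {a b x : ℝ}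
    (hf : ∀ t ∈ Icc a b, HasDerivWithinAt f (f' t) (Icc a b) t)
    (hw : ContinuousOn w (Icc a b)) (hw₀ : ∀ t ∈ Icc a b, 0 ≤ w t)
    (hf' : ∀ t ∈ Icc a b, -w t ≤ f' t) (hx : x ∈ Icc a b) :
    |f x| ≤ |f a| + |f b| + ∫ t in a..b, w t := by
  have restrict : ∀ s t, a ≤ s → s ≤ t → t ≤ b → -∫ u in s..t, w u ≤ f t - f s := by
    intro s t has hst htb
    have hsub : Icc s t ⊆ Icc a b := Icc_subset_Icc has htb
    exact neg_integral_le_sub_of_hasDerivWithinAt_ge_neg hst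
      (fun u hu ↦ (hf u (hsub hu)).mono hsub) (hw.mono hsub) (fun u hu ↦ hf' u (hsub hu))
  have nonneg : ∀ s t, a ≤ s → s ≤ t → t ≤ b → 0 ≤ ∫ u in s..t, w u := fun s t has hst htb ↦
    intervalIntegral.integral_nonneg hst fun u hu ↦ hw₀ u ⟨has.trans hu.1, hu.2.trans htb⟩
  have split : (∫ u in a..x, w u) + ∫ u in x..b, w u = ∫ u in a..b, w u :=
    intervalIntegral.integral_add_adjacent_intervals
      ((hw.mono (Icc_subset_Icc le_rfl hx.2)).intervalIntegrable_of_Icc hx.1)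
      ((hw.mono (Icc_subset_Icc hx.1 le_rfl)).intervalIntegrable_of_Icc hx.2)
  have lower := restrict a x le_rfl hx.1 hx.2
  have upper := restrict x b hx.1 hx.2 le_rfl
  have left_nonneg := nonneg a x le_rfl hx.1 hx.2
  have right_nonneg := nonneg x b hx.1 hx.2 le_rfl
  rw [abs_le]
  constructor <;> linarith [neg_abs_le (f a), le_abs_self (f b), abs_nonneg (f a), abs_nonneg (f b)]

/-- `∂_v (r ν)` along the ray, by the evolution equation for `ν`. -/
noncomputable def rNuSource (k Λ r Ω T : ℝ) : ℝ :=
  -(k * Ω ^ 2) / 4 + 4 * π * r ^ 2 * T + (1 / 4) * r ^ 2 * Ω ^ 2 * Λ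

theorem hasDerivWithinAt_mul_nu {k Λ : ℝ} {r lam Ω T ν : ℝ → ℝ} {s : Set ℝ} {v : ℝ}
    (hr : HasDerivWithinAt r (lam v) s v)
    (hν : HasDerivWithinAt ν (-(k * Ω v ^ 2) / (4 * r v) - (r v)⁻¹ * lam v * ν v
      + 4 * π * r v * T v + (1 / 4) * r v * Ω v ^ 2 * Λ) s v) (hrv : r v ≠ 0) :
    HasDerivWithinAt (fun t ↦ r t * ν t) (rNuSource k Λ (r v) (Ω v) (T v)) s v := by
  refine (hr.mul hν).congr_deriv ?_
  field_simp
  unfold rNuSource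
  ring

theorem neg_mul_sq_le_rNuSource {k Λ r R Ω T : ℝ} (hr : 0 ≤ r) (hrR : r ≤ R) (hT : 0 ≤ T) :
    -((|k| + R ^ 2 * |Λ|) / 4 * Ω ^ 2) ≤ rNuSource k Λ r Ω T := by
  have hr2 : r ^ 2 ≤ R ^ 2 := pow_le_pow_left₀ hr hrR 2
  have hk : k * Ω ^ 2 ≤ |k| * Ω ^ 2 := mul_le_mul_of_nonneg_right (le_abs_self k) (sq_nonneg Ω)
  have hΛ : -(R ^ 2 * |Λ|) ≤ r ^ 2 * Λ := by
    nlinarith [neg_abs_le Λ, abs_nonneg Λ, mul_le_mul_of_nonneg_right hr2 (abs_nonneg Λ)]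
  have hmatter : 0 ≤ 4 * π * r ^ 2 * T := by positivity
  unfold rNuSource
  nlinarith [mul_le_mul_of_nonneg_right hΛ (sq_nonneg Ω)]

theorem nu_sup_bound_general
    (k Λ r₀ R V : ℝ) (hr₀ : 0 < r₀) (hrR : r₀ ≤ R) :
    ∃ C : ℝ, 0 < C ∧
      ∀ (r lam Ω T ν : ℝ → ℝ),
        (∀ v ∈ Set.Icc (0 : ℝ) V, HasDerivWithinAt r (lam v) (Set.Icc 0 V) v) →
        ContinuousOn lam (Set.Icc 0 V) →
        (∀ v ∈ Set.Icc (0 : ℝ) V, r₀ ≤ r v ∧ r v ≤ R) →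
        ContinuousOn Ω (Set.Icc 0 V) →
        (∀ v ∈ Set.Icc (0 : ℝ) V, 0 < Ω v) →
        ContinuousOn T (Set.Icc 0 V) →
        (∀ v ∈ Set.Icc (0 : ℝ) V, 0 ≤ T v) →
        (∀ v ∈ Set.Icc (0 : ℝ) V, HasDerivWithinAt ν
          (-(k * Ω v ^ 2) / (4 * r v) - (r v)⁻¹ * lam v * ν v
            + 4 * π * r v * T v + (1 / 4) * r v * Ω v ^ 2 * Λ) (Set.Icc 0 V) v) →
        ∀ v ∈ Set.Icc (0 : ℝ) V,
          |ν v| ≤ C * (|ν 0| + |ν V| + ∫ t in (0 : ℝ)..V, Ω t ^ 2) := by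
  set c := (|k| + R ^ 2 * |Λ|) / 4
  have hR : 0 < R := hr₀.trans_le hrR
  refine ⟨(R + c) / r₀, by positivity, fun r lam Ω T ν hr _ hrb hΩ _ _ hT hν v hv ↦ ?_⟩
  have hrpos : ∀ t ∈ Icc 0 V, 0 < r t := fun t ht ↦ hr₀.trans_le (hrb t ht).1
  have hV : (0 : ℝ) ≤ V := hv.1.trans hv.2
  have hrν : |r v * ν v| ≤ |r 0 * ν 0| + |r V * ν V| + ∫ t in (0 : ℝ)..V, c * Ω t ^ 2 :=
    abs_le_of_hasDerivWithinAt_ge_neg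
      (fun t ht ↦ hasDerivWithinAt_mul_nu (hr t ht) (hν t ht) (hrpos t ht).ne')
      (continuousOn_const.mul (hΩ.pow 2)) (fun t _ ↦ by positivity)
      (fun t ht ↦ neg_mul_sq_le_rNuSource (hrpos t ht).le (hrb t ht).2 (hT t ht)) hv
  have hI : 0 ≤ ∫ t in (0 : ℝ)..V, Ω t ^ 2 :=
    intervalIntegral.integral_nonneg hV fun t _ ↦ sq_nonneg (Ω t)
  have habs : ∀ t ∈ Icc 0 V, |r t * ν t| = r t * |ν t| := fun t ht ↦ by
    rw [abs_mul, abs_of_pos (hrpos t ht)]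
  rw [habs v hv, habs 0 ⟨le_rfl, hV⟩, habs V ⟨hV, le_rfl⟩] at hrν
  rw [intervalIntegral.integral_const_mul] at hrν
  rw [div_mul_eq_mul_div, le_div_iff₀ hr₀]
  nlinarith [mul_le_mul_of_nonneg_right (hrb v hv).1 (abs_nonneg (ν v)),
    mul_le_mul_of_nonneg_right (hrb 0 ⟨le_rfl, hV⟩).2 (abs_nonneg (ν 0)),
    mul_le_mul_of_nonneg_right (hrb V ⟨hV, le_rfl⟩).2 (abs_nonneg (ν V)),
    abs_nonneg (ν 0), abs_nonneg (ν V), show 0 ≤ c by positivity]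

/-- The estimate (allowehave): the sup of `|ν|` along a constant-`u` null ray is controlled
by its two endpoint values and the integral of `Ω²`, with a constant depending only on
`k`, `Λ`, `r₀`, `R`, `V`. -/
theorem nu_sup_bound
    (k Λ r₀ R V : ℝ) (hr₀ : 0 < r₀) (hrR : r₀ ≤ R) (hV : 0 < V) :
    ∃ C : ℝ, 0 < C ∧
      ∀ (r lam Ω T ν : ℝ → ℝ),
        (∀ v ∈ Set.Icc (0 : ℝ) V, HasDerivWithinAt r (lam v) (Set.Icc 0 V) v) →
        ContinuousOn lam (Set.Icc 0 V) →
        (∀ v ∈ Set.Icc (0 : ℝ) V, r₀ ≤ r v ∧ r v ≤ R) →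
        ContinuousOn Ω (Set.Icc 0 V) →
        (∀ v ∈ Set.Icc (0 : ℝ) V, 0 < Ω v) →
        ContinuousOn T (Set.Icc 0 V) →
        (∀ v ∈ Set.Icc (0 : ℝ) V, 0 ≤ T v) →
        (∀ v ∈ Set.Icc (0 : ℝ) V, HasDerivWithinAt ν
          (-(k * Ω v ^ 2) / (4 * r v) - (r v)⁻¹ * lam v * ν v
            + 4 * π * r v * T v + (1 / 4) * r v * Ω v ^ 2 * Λ) (Set.Icc 0 V) v) →
        ∀ v ∈ Set.Icc (0 : ℝ) V,
          |ν v| ≤ C * (|ν 0| + |ν V| + ∫ t in (0 : ℝ)..V, Ω t ^ 2) :=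
  nu_sup_bound_general k Λ r₀ R V hr₀ hrR
end

section
/- Let c > 0, R > 0 and a < b be real numbers, and let y : [a,b] → ℝ be C¹ with y(a) ≥ 2R and, for all u ∈ [a,b], (d/du)(y(u)²) ≥ (2/3)·c·( y(u)³ − R³ ). Then b − a ≤ 24 / ( 7·c·y(a) ). -/
/-!
If `y ≥ 2R` then `y³ - R³ ≥ 7y³/8`, so the inequality gives the Riccati bound
`y' ≥ (7/24) c y²`. At the level `2R` this forces `y' > 0`, so `y` never drops below `2R`
and the Riccati bound holds on all of `[a, b]`. Then `1/y` decreases at rate at least `7c/24`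
while staying positive, which bounds the length of the interval by `24 / (7 c y(a))`.
-/

open Set

theorem le_image_of_deriv_right_pos_at_level {y y' : ℝ → ℝ} {a b m : ℝ}
    (hy : ContinuousOn y (Icc a b)) (hy' : ∀ x ∈ Ico a b, HasDerivWithinAt y (y' x) (Ici x) x)
    (ha : m ≤ y a) (hlevel : ∀ x ∈ Ico a b, y x = m → 0 < y' x) :
    ∀ ⦃x⦄, x ∈ Icc a b → m ≤ y x := fun x hx => by
  have := image_le_of_deriv_right_lt_deriv_boundary (f := fun u => -y u) (B := fun _ => -m)
    (B' := 0) hy.neg (fun u hu => (hy' u hu).neg) (neg_le_neg ha)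
    (fun _ => hasDerivAt_const _ _)
    (fun u hu hum => by simpa using hlevel u hu (neg_inj.1 hum)) hx
  exact neg_le_neg_iff.1 this

theorem mul_sub_le_inv_sub_inv_of_mul_sq_le_deriv {y y' : ℝ → ℝ} {a b k : ℝ}
    (hy : ContinuousOn y (Icc a b)) (hy' : ∀ x ∈ Ico a b, HasDerivWithinAt y (y' x) (Ici x) x)
    (hpos : ∀ x ∈ Icc a b, 0 < y x) (hk : ∀ x ∈ Ico a b, k * y x ^ 2 ≤ y' x) :
    ∀ ⦃x⦄, x ∈ Icc a b → k * (x - a) ≤ (y a)⁻¹ - (y x)⁻¹ := fun x hx => by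
  have hB : ∀ u, HasDerivAt (fun u => (y a)⁻¹ - k * (u - a)) (-k) u := fun u => by
    simpa using ((hasDerivAt_id u).sub_const a).const_mul k |>.const_sub (y a)⁻¹
  have := image_le_of_deriv_right_le_deriv_boundary (f := fun u => (y u)⁻¹)
    (hy.inv₀ fun u hu => (hpos u hu).ne')
    (fun u hu => (hy' u hu).inv (hpos u (Ico_subset_Icc_self hu)).ne') (by simp)
    (fun u _ => (hB u).continuousAt.continuousWithinAt) (fun u _ => (hB u).hasDerivWithinAt)
    (fun u hu => by
      rw [neg_div, neg_le_neg_iff, le_div_iff₀ (pow_pos (hpos u (Ico_subset_Icc_self hu)) 2)]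
      exact hk u hu) hx
  linarith

theorem seven_div_twentyFour_mul_sq_le {c R y y' : ℝ} (hc : 0 ≤ c) (hR : 0 < R)
    (hy : 2 * R ≤ y) (h : 2 / 3 * c * (y ^ 3 - R ^ 3) ≤ 2 * y * y') :
    7 / 24 * c * y ^ 2 ≤ y' := by
  have hy0 : 0 < y := by linarith
  have hR3 : 8 * R ^ 3 ≤ y ^ 3 := by nlinarith [pow_le_pow_left₀ (by positivity) hy 3]
  have : 7 / 24 * c * y ^ 2 * (2 * y) ≤ y' * (2 * y) := by
    nlinarith [mul_le_mul_of_nonneg_left hR3 hc]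
  exact le_of_mul_le_mul_right this (by positivity)

theorem blowup_time_bound_general
    (c R a b : ℝ) (hc : 0 < c) (hR : 0 < R) (hab : a < b)
    (y y' : ℝ → ℝ)
    (hderiv : ∀ u ∈ Set.Icc a b, HasDerivWithinAt y (y' u) (Set.Icc a b) u)
    (hy0 : 2 * R ≤ y a)
    (hineq : ∀ u ∈ Set.Icc a b, 2 / 3 * c * (y u ^ 3 - R ^ 3) ≤ 2 * y u * y' u) :
    b - a ≤ 24 / (7 * c * y a) := by
  have hy : ContinuousOn y (Icc a b) := fun u hu => (hderiv u hu).continuousWithinAt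
  have hy' : ∀ x ∈ Ico a b, HasDerivWithinAt y (y' x) (Ici x) x := fun x hx =>
    (hderiv x (Ico_subset_Icc_self hx)).mono_of_mem_nhdsWithin (Icc_mem_nhdsGE_of_mem hx)
  have hriccati : ∀ x ∈ Icc a b, 2 * R ≤ y x → 7 / 24 * c * y x ^ 2 ≤ y' x := fun x hx h2R =>
    seven_div_twentyFour_mul_sq_le hc.le hR h2R (hineq x hx)
  have hbarrier : ∀ x ∈ Icc a b, 2 * R ≤ y x :=
    le_image_of_deriv_right_pos_at_level hy hy' hy0 fun x hx hx2R =>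
      (by positivity : 0 < 7 / 24 * c * (2 * R) ^ 2).trans_le
        (hx2R ▸ hriccati x (Ico_subset_Icc_self hx) hx2R.ge)
  have hpos : ∀ x ∈ Icc a b, 0 < y x := fun x hx => by linarith [hbarrier x hx]
  have hb : b ∈ Icc a b := right_mem_Icc.2 hab.le
  have hlen := mul_sub_le_inv_sub_inv_of_mul_sq_le_deriv hy hy' hpos
    (fun x hx => hriccati x (Ico_subset_Icc_self hx) (hbarrier x (Ico_subset_Icc_self hx))) hb
  have hya := hpos a (left_mem_Icc.2 hab.le)
  have hyb := inv_pos.2 (hpos b hb)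
  rw [le_div_iff₀ (by positivity)]
  have := mul_le_mul_of_nonneg_right (hlen.trans (sub_le_self _ hyb.le)) hya.le
  rw [inv_mul_cancel₀ hya.ne'] at this
  linarith

/-- The differential inequality (difeq) of Proposition 8.7: if `(y²)' ≥ (2/3)c(y³ − R³)`
on `[a,b]` with `y(a) ≥ 2R`, then `b − a ≤ 24/(7 c y(a))` (the blow-up time tends to `0`
as `y(a) → ∞`). -/
theorem blowup_time_bound
    (c R a b : ℝ) (hc : 0 < c) (hR : 0 < R) (hab : a < b)
    (y y' : ℝ → ℝ)
    (hderiv : ∀ u ∈ Set.Icc a b, HasDerivWithinAt y (y' u) (Set.Icc a b) u)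
    (hcont : ContinuousOn y' (Set.Icc a b))
    (hy0 : 2 * R ≤ y a)
    (hineq : ∀ u ∈ Set.Icc a b, 2 / 3 * c * (y u ^ 3 - R ^ 3) ≤ 2 * y u * y' u) :
    b - a ≤ 24 / (7 * c * y a) :=
  blowup_time_bound_general c R a b hc hR hab y y' hderiv hy0 hineq
end

section
/- Fix reals 0 < r₀ ≤ R, K ≥ 0 and v₁ < v₂. Let r : [v₁,v₂] → ℝ be C¹ with r₀ ≤ r ≤ R, write λ := r', let Ω, T : [v₁,v₂] → ℝ be continuous with Ω > 0 and T ≥ 0, suppose the function v ↦ Ω(v)⁻²λ(v) is monotone nonincreasing, and let ν : [v₁,v₂] → ℝ be C¹ with ν < 0 everywhere, satisfying ν'(v) = −Ω(v)²/(4 r(v)) − r(v)⁻¹ λ(v) ν(v) + 4π r(v) T(v) for all v. Define κ := −Ω²/(4ν) and assume ∫_{v₁}^{v₂} κ(v) dv ≤ K. Then |ν(v₂)| ≤ |ν(v₁)| · exp( (2/r₀)·( 2(R − r₀) + K ) ). -/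
/-!
With `κ = -Ω²/(4ν)` the equation for `ν` reads `ν' = ((κ - λ)/r) ν + 4πrT`; as `T ≥ 0` and
`ν < 0`, Grönwall's inequality bounds `|ν(v₂)|` by `|ν(v₁)| exp ∫ (κ - λ)/r`, and the exponent is
at most `(∫ κ + ∫ |λ|)/r₀`. Because `Ω⁻²λ` is nonincreasing, `λ = r'` changes sign at most once,
from `+` to `-`, so `r` rises and then falls and `∫ |λ| ≤ 2(R - r₀)`.
-/

open Real Set MeasureTheory intervalIntegral

theorem AntitoneOn.exists_nonneg_nonpos {φ : ℝ → ℝ} {a b : ℝ} (hab : a ≤ b)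
    (hφ : AntitoneOn φ (Icc a b)) :
    ∃ c ∈ Icc a b, (∀ x ∈ Ico a c, 0 ≤ φ x) ∧ ∀ x ∈ Ioc c b, φ x ≤ 0 := by
  set S := insert a {x ∈ Icc a b | 0 ≤ φ x}
  have hS : ∀ x ∈ S, x ≤ b := by
    rintro x (rfl | hx)
    exacts [hab, hx.1.2]
  have hbdd : BddAbove S := ⟨b, hS⟩
  have hac : a ≤ sSup S := le_csSup hbdd (mem_insert _ _)
  refine ⟨sSup S, ⟨hac, csSup_le (insert_nonempty _ _) hS⟩, fun x hx => ?_, fun x hx => ?_⟩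
  · obtain ⟨y, hy, hxy⟩ := exists_lt_of_lt_csSup (insert_nonempty _ _) hx.2
    rcases hy with rfl | ⟨hy, hφy⟩
    · exact absurd hx.1 hxy.not_ge
    · exact hφy.trans (hφ ⟨hx.1, hxy.le.trans hy.2⟩ hy hxy.le)
  · by_contra! h
    exact hx.1.not_ge (le_csSup hbdd (Or.inr ⟨⟨hac.trans hx.1.le, hx.2⟩, h.le⟩))

theorem integral_abs_deriv_eq_of_nonneg_of_nonpos {f f' : ℝ → ℝ} {a b c : ℝ} (hac : a ≤ c)
    (hcb : c ≤ b) (hf : ContinuousOn f (Icc a b))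
    (hderiv : ∀ x ∈ Ioo a b, HasDerivAt f (f' x) x) (hint : IntervalIntegrable f' volume a b)
    (hpos : ∀ x ∈ Ioo a c, 0 ≤ f' x) (hneg : ∀ x ∈ Ioo c b, f' x ≤ 0) :
    ∫ x in a..b, |f' x| = 2 * f c - f a - f b := by
  have hc : c ∈ uIcc a b := mem_uIcc_of_le hac hcb
  have hint₁ := hint.abs.mono_set (uIcc_subset_uIcc left_mem_uIcc hc)
  have hint₂ := hint.abs.mono_set (uIcc_subset_uIcc hc right_mem_uIcc)
  have h₁ : ∫ x in a..c, |f' x| = f c - f a :=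
    integral_eq_sub_of_hasDerivAt_of_le hac (hf.mono (Icc_subset_Icc_right hcb))
      (fun x hx => by
        rw [abs_of_nonneg (hpos x hx)]
        exact hderiv x ⟨hx.1, hx.2.trans_le hcb⟩) hint₁
  have h₂ : ∫ x in c..b, |f' x| = (-f) b - (-f) c :=
    integral_eq_sub_of_hasDerivAt_of_le hcb (hf.mono (Icc_subset_Icc_left hac)).neg
      (fun x hx => by
        rw [abs_of_nonpos (hneg x hx)]
        exact (hderiv x ⟨hac.trans_lt hx.1, hx.2⟩).neg) hint₂
  rw [← integral_add_adjacent_intervals hint₁ hint₂, h₁, h₂, Pi.neg_apply, Pi.neg_apply]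
  ring

theorem integral_abs_deriv_le_of_antitoneOn_mul {r r' w : ℝ → ℝ} {a b m M : ℝ} (hab : a ≤ b)
    (hr : ∀ x ∈ Icc a b, HasDerivWithinAt r (r' x) (Icc a b) x)
    (hr' : ContinuousOn r' (Icc a b)) (hrm : ∀ x ∈ Icc a b, m ≤ r x ∧ r x ≤ M)
    (hw : ∀ x ∈ Icc a b, 0 < w x) (hmono : AntitoneOn (fun x => w x * r' x) (Icc a b)) :
    ∫ x in a..b, |r' x| ≤ 2 * (M - m) := by
  obtain ⟨c, hc, hpos, hneg⟩ := hmono.exists_nonneg_nonpos hab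
  have hra := hrm a (left_mem_Icc.2 hab)
  have hrb := hrm b (right_mem_Icc.2 hab)
  have hrc := hrm c hc
  rw [integral_abs_deriv_eq_of_nonneg_of_nonpos hc.1 hc.2 (fun x hx => (hr x hx).continuousWithinAt)
    (fun x hx => (hr x (Ioo_subset_Icc_self hx)).hasDerivAt (Icc_mem_nhds hx.1 hx.2))
    (hr'.intervalIntegrable_of_Icc hab)
    (fun x hx => nonneg_of_mul_nonneg_right (hpos x (Ioo_subset_Ico_self hx))
      (hw x ⟨hx.1.le, hx.2.le.trans hc.2⟩))
    (fun x hx => nonpos_of_mul_nonpos_right (hneg x (Ioo_subset_Ioc_self hx))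
      (hw x ⟨hc.1.trans hx.1.le, hx.2.le⟩))]
  linarith [hra.1, hrb.1, hrc.2]

theorem le_mul_exp_integral_of_deriv_le_mul {f f' g : ℝ → ℝ} {a b : ℝ} (hab : a ≤ b)
    (hf : ContinuousOn f (Icc a b)) (hf' : ∀ x ∈ Ioo a b, HasDerivAt f (f' x) x)
    (hg : ContinuousOn g (Icc a b)) (hle : ∀ x ∈ Ioo a b, f' x ≤ g x * f x) :
    f b ≤ f a * exp (∫ x in a..b, g x) := by
  set G := fun x => ∫ t in a..x, g t
  have hG : ContinuousOn G (Icc a b) := by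
    have := continuousOn_primitive_interval' (hg.intervalIntegrable_of_Icc (μ := volume) hab)
      left_mem_uIcc
    rwa [uIcc_of_le hab] at this
  have hG' : ∀ x ∈ Ioo a b, HasDerivAt G (g x) x := fun x hx =>
    integral_hasDerivAt_right
      ((hg.mono (Icc_subset_Icc_right hx.2.le)).intervalIntegrable_of_Icc hx.1.le)
      ((hg.mono Ioo_subset_Icc_self).stronglyMeasurableAtFilter isOpen_Ioo x hx)
      (hg.continuousAt (Icc_mem_nhds hx.1 hx.2))
  have hanti : AntitoneOn (fun x => f x * exp (-G x)) (Icc a b) := by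
    refine antitoneOn_of_hasDerivWithinAt_nonpos (convex_Icc a b) (hf.mul hG.neg.rexp)
      (f' := fun x => f' x * exp (-G x) + f x * (exp (-G x) * -g x))
      (fun x hx => ?_) (fun x hx => ?_)
    · rw [interior_Icc] at hx ⊢
      exact ((hf' x hx).mul (hG' x hx).neg.exp).hasDerivWithinAt
    · rw [interior_Icc] at hx
      nlinarith [hle x hx, exp_pos (-G x)]
  have hb := hanti (left_mem_Icc.2 hab) (right_mem_Icc.2 hab) hab
  simp only [G, integral_same, neg_zero, exp_zero, mul_one] at hb
  calc f b = f b * exp (-G b) * exp (G b) := by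
        rw [mul_assoc, ← exp_add, neg_add_cancel, exp_zero, mul_one]
    _ ≤ f a * exp (G b) := by gcongr

theorem integral_sub_div_le_add_integral_abs_div {κ l r : ℝ → ℝ} {a b r₀ : ℝ}
    (hab : a ≤ b) (hr₀ : 0 < r₀) (hκ : ContinuousOn κ (Icc a b)) (hl : ContinuousOn l (Icc a b))
    (hr : ContinuousOn r (Icc a b)) (hκ₀ : ∀ x ∈ Icc a b, 0 ≤ κ x)
    (hr₀r : ∀ x ∈ Icc a b, r₀ ≤ r x) :
    ∫ x in a..b, (κ x - l x) / r x ≤ ((∫ x in a..b, κ x) + ∫ x in a..b, |l x|) / r₀ := by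
  have hrpos : ∀ x ∈ Icc a b, 0 < r x := fun x hx => hr₀.trans_le (hr₀r x hx)
  have hpointwise : ∀ x ∈ Icc a b, (κ x - l x) / r x ≤ (κ x + |l x|) / r₀ := fun x hx =>
    calc (κ x - l x) / r x ≤ (κ x + |l x|) / r x := by
          gcongr
          · exact (hrpos x hx).le
          · linarith [neg_abs_le (l x)]
      _ ≤ (κ x + |l x|) / r₀ :=
          div_le_div_of_nonneg_left (add_nonneg (hκ₀ x hx) (abs_nonneg _)) hr₀ (hr₀r x hx)
  calc ∫ x in a..b, (κ x - l x) / r x ≤ ∫ x in a..b, (κ x + |l x|) / r₀ :=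
        integral_mono_on hab
          (((hκ.sub hl).div hr fun x hx => (hrpos x hx).ne').intervalIntegrable_of_Icc hab)
          (((hκ.add hl.abs).div_const r₀).intervalIntegrable_of_Icc hab) hpointwise
    _ = ((∫ x in a..b, κ x) + ∫ x in a..b, |l x|) / r₀ := by
        rw [intervalIntegral.integral_div, integral_add (hκ.intervalIntegrable_of_Icc hab)
          (hl.abs.intervalIntegrable_of_Icc hab)]

/-- The identity `-Ω²/(4r) = κν/r` absorbs the source term `-Ω²/(4r)` into the coefficient
`(κ - λ)/r`, leaving only `4πrT ≥ 0` outside. -/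
theorem neg_nu_rhs_le_mul {Ω r lam ν T : ℝ} (hr : 0 < r) (hν : ν < 0) (hT : 0 ≤ T) :
    -(-(Ω ^ 2) / (4 * r) - r⁻¹ * lam * ν + 4 * π * r * T)
      ≤ (-(Ω ^ 2) / (4 * ν) - lam) / r * -ν := by
  have hcoeff : (-(Ω ^ 2) / (4 * ν) - lam) / r * -ν = -(-(Ω ^ 2) / (4 * r) - r⁻¹ * lam * ν) := by
    field_simp [hr.ne', hν.ne]
  rw [hcoeff]
  linarith [mul_nonneg (mul_nonneg pi_pos.le hr.le) hT]

theorem nu_pointwise_gronwall_bound_general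
    (r₀ R K v₁ v₂ : ℝ) (hr₀ : 0 < r₀) (hrR : r₀ ≤ R) (hK : 0 ≤ K) (hv : v₁ < v₂)
    (r lam Ω T ν : ℝ → ℝ)
    (hrderiv : ∀ v ∈ Set.Icc v₁ v₂, HasDerivWithinAt r (lam v) (Set.Icc v₁ v₂) v)
    (hlamcont : ContinuousOn lam (Set.Icc v₁ v₂))
    (hrbound : ∀ v ∈ Set.Icc v₁ v₂, r₀ ≤ r v ∧ r v ≤ R)
    (hΩcont : ContinuousOn Ω (Set.Icc v₁ v₂))
    (hΩpos : ∀ v ∈ Set.Icc v₁ v₂, 0 < Ω v)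
    (hT : ∀ v ∈ Set.Icc v₁ v₂, 0 ≤ T v)
    (hmono : AntitoneOn (fun v => (Ω v ^ 2)⁻¹ * lam v) (Set.Icc v₁ v₂))
    (hνneg : ∀ v ∈ Set.Icc v₁ v₂, ν v < 0)
    (hν : ∀ v ∈ Set.Icc v₁ v₂, HasDerivWithinAt ν
      (-(Ω v ^ 2) / (4 * r v) - (r v)⁻¹ * lam v * ν v + 4 * π * r v * T v)
      (Set.Icc v₁ v₂) v)
    (hκ : (∫ v in v₁..v₂, -(Ω v ^ 2) / (4 * ν v)) ≤ K) :
    |ν v₂| ≤ |ν v₁| * Real.exp (2 / r₀ * (2 * (R - r₀) + K)) := by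
  have hνcont : ContinuousOn ν (Icc v₁ v₂) := fun v hv => (hν v hv).continuousWithinAt
  have hrcont : ContinuousOn r (Icc v₁ v₂) := fun v hv => (hrderiv v hv).continuousWithinAt
  have hrpos : ∀ v ∈ Icc v₁ v₂, 0 < r v := fun v hv => hr₀.trans_le (hrbound v hv).1
  have hκcont : ContinuousOn (fun v => -(Ω v ^ 2) / (4 * ν v)) (Icc v₁ v₂) :=
    (hΩcont.pow 2).neg.div (continuousOn_const.mul hνcont)
      fun v hv => mul_ne_zero four_ne_zero (hνneg v hv).ne
  have hgronwall := le_mul_exp_integral_of_deriv_le_mul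
    (f := fun v => -ν v) (g := fun v => (-(Ω v ^ 2) / (4 * ν v) - lam v) / r v) hv.le hνcont.neg
    (fun v hv => ((hν v (Ioo_subset_Icc_self hv)).hasDerivAt (Icc_mem_nhds hv.1 hv.2)).neg)
    ((hκcont.sub hlamcont).div hrcont fun v hv => (hrpos v hv).ne')
    (fun v hv => neg_nu_rhs_le_mul (hrpos v (Ioo_subset_Icc_self hv))
      (hνneg v (Ioo_subset_Icc_self hv)) (hT v (Ioo_subset_Icc_self hv)))
  have hlam : ∫ v in v₁..v₂, |lam v| ≤ 2 * (R - r₀) :=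
    integral_abs_deriv_le_of_antitoneOn_mul hv.le hrderiv hlamcont hrbound
      (fun v hv => inv_pos.2 (pow_pos (hΩpos v hv) 2)) hmono
  have hexponent : ∫ v in v₁..v₂, (-(Ω v ^ 2) / (4 * ν v) - lam v) / r v
      ≤ 2 / r₀ * (2 * (R - r₀) + K) :=
    calc _ ≤ ((∫ v in v₁..v₂, -(Ω v ^ 2) / (4 * ν v)) + ∫ v in v₁..v₂, |lam v|) / r₀ :=
          integral_sub_div_le_add_integral_abs_div hv.le hr₀ hκcont hlamcont hrcont
            (fun v hv => div_nonneg_of_nonpos (neg_nonpos.2 (sq_nonneg _))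
              (by linarith [hνneg v hv])) fun v hv => (hrbound v hv).1
      _ ≤ 2 * (2 * (R - r₀) + K) / r₀ := by gcongr; linarith
      _ = 2 / r₀ * (2 * (R - r₀) + K) := by ring
  have hν₁ := hνneg v₁ (left_mem_Icc.2 hv.le)
  rw [abs_of_neg (hνneg v₂ (right_mem_Icc.2 hv.le)), abs_of_neg hν₁]
  exact hgronwall.trans (by gcongr; linarith)

/-- The pointwise `ν`-estimate of Section 11: along an ingoing ray with `r₀ ≤ r ≤ R`,
`Ω⁻²λ` nonincreasing, `ν < 0` satisfying
`∂_v ν = −Ω²/(4r) − r⁻¹λν + 4πrT` and `∫ κ ≤ K` (with `κ = −Ω²/(4ν)`), the endpoint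
value of `|ν|` is controlled by a Grönwall factor. -/
theorem nu_pointwise_gronwall_bound
    (r₀ R K v₁ v₂ : ℝ) (hr₀ : 0 < r₀) (hrR : r₀ ≤ R) (hK : 0 ≤ K) (hv : v₁ < v₂)
    (r lam Ω T ν : ℝ → ℝ)
    (hrderiv : ∀ v ∈ Set.Icc v₁ v₂, HasDerivWithinAt r (lam v) (Set.Icc v₁ v₂) v)
    (hlamcont : ContinuousOn lam (Set.Icc v₁ v₂))
    (hrbound : ∀ v ∈ Set.Icc v₁ v₂, r₀ ≤ r v ∧ r v ≤ R)
    (hΩcont : ContinuousOn Ω (Set.Icc v₁ v₂))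
    (hΩpos : ∀ v ∈ Set.Icc v₁ v₂, 0 < Ω v)
    (hTcont : ContinuousOn T (Set.Icc v₁ v₂))
    (hT : ∀ v ∈ Set.Icc v₁ v₂, 0 ≤ T v)
    (hmono : AntitoneOn (fun v => (Ω v ^ 2)⁻¹ * lam v) (Set.Icc v₁ v₂))
    (hνneg : ∀ v ∈ Set.Icc v₁ v₂, ν v < 0)
    (hν : ∀ v ∈ Set.Icc v₁ v₂, HasDerivWithinAt ν
      (-(Ω v ^ 2) / (4 * r v) - (r v)⁻¹ * lam v * ν v + 4 * π * r v * T v)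
      (Set.Icc v₁ v₂) v)
    (hκ : (∫ v in v₁..v₂, -(Ω v ^ 2) / (4 * ν v)) ≤ K) :
    |ν v₂| ≤ |ν v₁| * Real.exp (2 / r₀ * (2 * (R - r₀) + K)) :=
  nu_pointwise_gronwall_bound_general r₀ R K v₁ v₂ hr₀ hrR hK hv r lam Ω T ν hrderiv hlamcont
    hrbound hΩcont hΩpos hT hmono hνneg hν hκ
end
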